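/- arXiv:2511.07271 — 2 statements merged into one kernel-verified Lean document; each statement's English description precedes it below -/
import Mathlib

section
/- For every natural number d ≥ 1 and real exponents α₀, α₁, …, α_d > −1, the integral over the standard d-simplex Δ_d = {x ∈ ℝ^d : xᵢ ≥ 0 for all i, and x₁ + ⋯ + x_d ≤ 1} satisfies ∫_{Δ_d} (∏_{i=1}^{d} xᵢ^{αᵢ}) · (1 − x₁ − ⋯ − x_d)^{α₀} dx = (∏_{i=0}^{d} Γ(αᵢ + 1)) / Γ(d + 1 + α₀ + α₁ + ⋯ + α_d), where Γ denotes the real Gamma function and the integral is with respect to d-dimensional Lebesgue measure. -/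
/-!
Induct on `d` by integrating out the first coordinate `t = x₁`. For fixed `y = (x₂, …)` put
`c = 1 - ∑ y`; the substitution `t = c u` turns the inner integral
`∫₀^c t^α₁ (c - t)^α₀ dt` into `c^(α₀ + α₁ + 1) B(α₁ + 1, α₀ + 1)`, so what remains is the
`(d-1)`-dimensional integral with `α₀, α₁` merged into `α₀ + α₁ + 1`, and the Beta factor
telescopes the Gamma products. Working with `lintegral` avoids all integrability side conditions.
-/

open MeasureTheory Set ENNReal ProbabilityTheory

lemma lintegral_rpow_mul_one_sub_rpow {a b : ℝ} (ha : 0 < a) (hb : 0 < b) :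
    ∫⁻ x in Ioo 0 1, ENNReal.ofReal (x ^ (a - 1) * (1 - x) ^ (b - 1)) =
      ENNReal.ofReal (beta a b) := by
  have h := lintegral_betaPDF_eq_one ha hb
  have hB := beta_pos ha hb
  rw [lintegral_betaPDF] at h
  simp_rw [mul_assoc, ENNReal.ofReal_mul (one_div_pos.2 hB).le] at h
  rw [lintegral_const_mul _ (by fun_prop), one_div, ENNReal.ofReal_inv_of_pos hB] at h
  rw [← inv_inv (ENNReal.ofReal (beta a b))]
  exact ENNReal.eq_inv_of_mul_eq_one_left (by rwa [mul_comm])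

lemma lintegral_rpow_mul_sub_rpow {a b c : ℝ} (ha : -1 < a) (hb : -1 < b) (hc : 0 < c) :
    ∫⁻ t in Ioo 0 c, ENNReal.ofReal (t ^ a * (c - t) ^ b) =
      ENNReal.ofReal (c ^ (a + b + 1) * beta (a + 1) (b + 1)) := by
  have himage : (c * ·) '' Ioo 0 1 = Ioo 0 c := by
    rw [image_mul_left_Ioo hc, mul_zero, mul_one]
  rw [← himage, lintegral_image_eq_lintegral_abs_deriv_mul measurableSet_Ioo
    (fun x _ => (hasDerivAt_const_mul c).hasDerivWithinAt) (mul_right_injective₀ hc.ne').injOn]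
  have hunit : ∫⁻ x in Ioo 0 1, ENNReal.ofReal (x ^ a * (1 - x) ^ b) =
      ENNReal.ofReal (beta (a + 1) (b + 1)) := by
    simpa only [add_sub_cancel_right] using
      lintegral_rpow_mul_one_sub_rpow (a := a + 1) (b := b + 1) (by linarith) (by linarith)
  calc ∫⁻ x in Ioo 0 1, ENNReal.ofReal |c| * ENNReal.ofReal ((c * x) ^ a * (c - c * x) ^ b)
      = ∫⁻ x in Ioo 0 1, ENNReal.ofReal (c ^ (a + b + 1)) *
          ENNReal.ofReal (x ^ a * (1 - x) ^ b) := by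
        refine setLIntegral_congr_fun measurableSet_Ioo fun x hx => ?_
        rw [abs_of_pos hc, ← ENNReal.ofReal_mul hc.le, ← ENNReal.ofReal_mul (by positivity),
          show c - c * x = c * (1 - x) by ring, Real.mul_rpow hc.le hx.1.le,
          Real.mul_rpow hc.le (by linarith [hx.2]), Real.rpow_add hc, Real.rpow_add hc,
          Real.rpow_one]
        ring_nf
    _ = _ := by
        rw [lintegral_const_mul _ (by fun_prop), hunit, ← ENNReal.ofReal_mul (by positivity)]

noncomputable def multiBeta {n : ℕ} (a : Fin n → ℝ) : ℝ :=
  (∏ i, Real.Gamma (a i)) / Real.Gamma (∑ i, a i)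

lemma multiBeta_pos {n : ℕ} {a : Fin (n + 1) → ℝ} (ha : ∀ i, 0 < a i) : 0 < multiBeta a :=
  div_pos (Finset.prod_pos fun i _ => Real.Gamma_pos_of_pos (ha i))
    (Real.Gamma_pos_of_pos (Finset.sum_pos (fun i _ => ha i) Finset.univ_nonempty))

lemma multiBeta_add_one_pos {n : ℕ} {α : Fin (n + 1) → ℝ} (hα : ∀ i, -1 < α i) :
    0 < multiBeta (α + 1) :=
  multiBeta_pos fun i => neg_lt_iff_pos_add.1 (hα i)

/-- Integrating out `x₁` merges the exponents of `λ₀` and `λ₁ = x₁` into `α₀ + α₁ + 1`. -/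
def mergeExponents {d : ℕ} (α : Fin (d + 2) → ℝ) : Fin (d + 1) → ℝ :=
  Fin.cons (α 0 + α 1 + 1) fun j => α j.succ.succ

lemma multiBeta_mergeExponents_add_one_mul_beta {d : ℕ} {α : Fin (d + 2) → ℝ}
    (h0 : -1 < α 0) (h1 : -1 < α 1) :
    multiBeta (mergeExponents α + 1) * beta (α 1 + 1) (α 0 + 1) = multiBeta (α + 1) := by
  have hΓ : Real.Gamma (α 0 + α 1 + 1 + 1) ≠ 0 := (Real.Gamma_pos_of_pos (by linarith)).ne'
  simp only [multiBeta, beta, mergeExponents, Fin.prod_univ_succ, Fin.sum_univ_succ, Pi.add_apply,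
    Pi.one_apply, Fin.cons_zero, Fin.cons_succ, Fin.succ_zero_eq_one]
  rw [show α 1 + 1 + (α 0 + 1) = α 0 + α 1 + 1 + 1 by ring]
  field_simp
  ring_nf

lemma addHaar_preimage_linearMap_singleton {E : Type*} [NormedAddCommGroup E] [NormedSpace ℝ E]
    [MeasurableSpace E] [BorelSpace E] [FiniteDimensional ℝ E] (μ : Measure E)
    [μ.IsAddHaarMeasure] (L : E →ₗ[ℝ] ℝ) {c : ℝ} (hc : c ≠ 0) : μ (L ⁻¹' {c}) = 0 := by
  rcases (L ⁻¹' {c}).eq_empty_or_nonempty with hempty | ⟨x, hx⟩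
  · rw [hempty, measure_empty]
  have hker : LinearMap.ker L ≠ ⊤ := fun htop => hc <| by
    rw [← hx, ← LinearMap.mem_ker, htop]
    exact Submodule.mem_top
  have htranslate : L ⁻¹' {c} = (· + -x) ⁻¹' (LinearMap.ker L : Set E) := by
    ext y
    simp_all [sub_eq_zero, ← sub_eq_add_neg]
  rw [htranslate, measure_preimage_add_right, Measure.addHaar_submodule μ _ hker]

lemma volume_setOf_sum_eq_one {ι : Type*} [Fintype ι] :
    volume {y : ι → ℝ | ∑ i, y i = 1} = 0 := by
  have : {y : ι → ℝ | ∑ i, y i = 1} = (∑ i, LinearMap.proj i : (ι → ℝ) →ₗ[ℝ] ℝ) ⁻¹' {1} := by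
    ext y; simp
  rw [this]
  exact addHaar_preimage_linearMap_singleton volume _ one_ne_zero

def solidSimplex (d : ℕ) : Set (Fin d → ℝ) := {x | (∀ i, 0 ≤ x i) ∧ ∑ i, x i ≤ 1}

lemma measurableSet_solidSimplex (d : ℕ) : MeasurableSet (solidSimplex d) := by
  simp only [solidSimplex, ofPred_and, ofPred_forall]
  exact (MeasurableSet.iInter fun i =>
    measurableSet_le measurable_const (measurable_pi_apply i)).inter
      (measurableSet_le (by fun_prop) measurable_const)

lemma cons_mem_solidSimplex_iff {d : ℕ} {t : ℝ} {y : Fin d → ℝ} :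
    (Fin.cons t y : Fin (d + 1) → ℝ) ∈ solidSimplex (d + 1) ↔
      y ∈ solidSimplex d ∧ t ∈ Icc 0 (1 - ∑ i, y i) := by
  simp only [solidSimplex, mem_ofPred_eq, Fin.forall_fin_succ, Fin.cons_zero, Fin.cons_succ,
    Fin.sum_univ_succ, mem_Icc]
  constructor
  · rintro ⟨⟨ht, hy⟩, hsum⟩
    exact ⟨⟨hy, by linarith⟩, ht, by linarith⟩
  · rintro ⟨⟨hy, -⟩, ht, hsum⟩
    exact ⟨⟨ht, hy⟩, by linarith⟩

lemma lintegral_solidSimplex_succ {d : ℕ} {F : (Fin (d + 1) → ℝ) → ℝ≥0∞} (hF : Measurable F) :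
    ∫⁻ x in solidSimplex (d + 1), F x =
      ∫⁻ y in solidSimplex d, ∫⁻ t in Icc 0 (1 - ∑ i, y i), F (Fin.cons t y) := by
  have hcons := (volume_preserving_piFinSuccAbove (fun _ : Fin (d + 1) => ℝ) 0).symm
  have hslice (t : ℝ) (y : Fin d → ℝ) : (solidSimplex (d + 1)).indicator F (Fin.cons t y) =
      (solidSimplex d).indicator (fun y => (Icc 0 (1 - ∑ i, y i)).indicator
        (fun t => F (Fin.cons t y)) t) y := by
    by_cases h : y ∈ solidSimplex d ∧ t ∈ Icc 0 (1 - ∑ i, y i)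
    · rw [indicator_of_mem (cons_mem_solidSimplex_iff.2 h), indicator_of_mem h.1,
        indicator_of_mem h.2]
    · rw [indicator_of_notMem (mt cons_mem_solidSimplex_iff.1 h)]
      by_cases hy : y ∈ solidSimplex d
      · rw [indicator_of_mem hy, indicator_of_notMem (fun ht => h ⟨hy, ht⟩)]
      · rw [indicator_of_notMem hy]
  have hS := measurableSet_solidSimplex (d + 1)
  rw [← lintegral_indicator hS, ← hcons.lintegral_comp (hF.indicator hS), Measure.volume_eq_prod,
    lintegral_prod_symm, ← lintegral_indicator (measurableSet_solidSimplex d)]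
  swap
  · exact ((hF.indicator hS).comp (MeasurableEquiv.measurable _)).aemeasurable
  refine lintegral_congr fun y => ?_
  simp only [MeasurableEquiv.piFinSuccAbove_symm_apply, Fin.insertNthEquiv, Equiv.coe_fn_mk,
    Fin.insertNth_zero', hslice]
  by_cases hy : y ∈ solidSimplex d
  · simp only [indicator_of_mem hy, lintegral_indicator measurableSet_Icc]
  · simp only [indicator_of_notMem hy, lintegral_zero]

noncomputable def simplexMonomial {d : ℕ} (α : Fin (d + 1) → ℝ) (x : Fin d → ℝ) : ℝ :=
  (∏ i, x i ^ α i.succ) * (1 - ∑ i, x i) ^ α 0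

@[fun_prop]
lemma measurable_simplexMonomial {d : ℕ} (α : Fin (d + 1) → ℝ) :
    Measurable (simplexMonomial α) := by
  unfold simplexMonomial; fun_prop

lemma simplexMonomial_nonneg {d : ℕ} (α : Fin (d + 1) → ℝ) {x : Fin d → ℝ}
    (hx : x ∈ solidSimplex d) : 0 ≤ simplexMonomial α x :=
  mul_nonneg (Finset.prod_nonneg fun i _ => Real.rpow_nonneg (hx.1 i) _)
    (Real.rpow_nonneg (by linarith [hx.2]) _)

lemma simplexMonomial_cons {d : ℕ} (α : Fin (d + 2) → ℝ) (t : ℝ) (y : Fin d → ℝ) :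
    simplexMonomial α (Fin.cons t y) =
      t ^ α 1 * ((1 - ∑ i, y i) - t) ^ α 0 * ∏ i, y i ^ α i.succ.succ := by
  simp only [simplexMonomial, Fin.prod_univ_succ, Fin.sum_univ_succ, Fin.cons_zero, Fin.cons_succ,
    Fin.succ_zero_eq_one]
  rw [show (1 : ℝ) - (t + ∑ i, y i) = 1 - ∑ i, y i - t by ring]
  ring

lemma simplexMonomial_mergeExponents {d : ℕ} (α : Fin (d + 2) → ℝ) (y : Fin d → ℝ) :
    simplexMonomial (mergeExponents α) y =
      (∏ i, y i ^ α i.succ.succ) * (1 - ∑ i, y i) ^ (α 1 + α 0 + 1) := by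
  simp only [simplexMonomial, mergeExponents, Fin.cons_zero, Fin.cons_succ, add_comm (α 0)]

lemma lintegral_simplexMonomial_cons {d : ℕ} {α : Fin (d + 2) → ℝ} (h0 : -1 < α 0)
    (h1 : -1 < α 1) {y : Fin d → ℝ} (hy : ∑ i, y i < 1) :
    ∫⁻ t in Icc 0 (1 - ∑ i, y i), ENNReal.ofReal (simplexMonomial α (Fin.cons t y)) =
      ENNReal.ofReal (simplexMonomial (mergeExponents α) y) *
        ENNReal.ofReal (beta (α 1 + 1) (α 0 + 1)) := by
  set c := 1 - ∑ i, y i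
  set P := ∏ i, y i ^ α i.succ.succ
  have hc : 0 < c := by linarith
  calc ∫⁻ t in Icc 0 c, ENNReal.ofReal (simplexMonomial α (Fin.cons t y))
      = ∫⁻ t in Ioo 0 c, ENNReal.ofReal (t ^ α 1 * (c - t) ^ α 0) * ENNReal.ofReal P := by
        rw [← setLIntegral_congr Ioo_ae_eq_Icc]
        refine setLIntegral_congr_fun measurableSet_Ioo fun t ht => ?_
        rw [simplexMonomial_cons, ENNReal.ofReal_mul
          (mul_nonneg (Real.rpow_nonneg ht.1.le _) (Real.rpow_nonneg (by linarith [ht.2]) _))]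
    _ = ENNReal.ofReal (c ^ (α 1 + α 0 + 1) * beta (α 1 + 1) (α 0 + 1)) * ENNReal.ofReal P := by
        rw [lintegral_mul_const _ (by fun_prop), lintegral_rpow_mul_sub_rpow h1 h0 hc]
    _ = _ := by
        rw [simplexMonomial_mergeExponents, ENNReal.ofReal_mul (by positivity),
          ENNReal.ofReal_mul' (by positivity)]
        ring

theorem lintegral_simplexMonomial (d : ℕ) {α : Fin (d + 1) → ℝ} (hα : ∀ i, -1 < α i) :
    ∫⁻ x in solidSimplex d, ENNReal.ofReal (simplexMonomial α x) =
      ENNReal.ofReal (multiBeta (α + 1)) := by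
  induction d with
  | zero =>
    have hΓ : Real.Gamma (α 0 + 1) ≠ 0 := (Real.Gamma_pos_of_pos (by linarith [hα 0])).ne'
    simp [solidSimplex, simplexMonomial, multiBeta, hΓ, volume_pi]
  | succ d ih =>
    have hmerge : ∀ i, -1 < mergeExponents α i := Fin.cases
      (by simp only [mergeExponents, Fin.cons_zero]; linarith [hα 0, hα 1])
      (fun j => by simpa only [mergeExponents, Fin.cons_succ] using hα _)
    -- the slice formula needs `∑ y < 1`, which fails on the simplex only on a null hyperplane
    have hslice : ∀ᵐ y, y ∈ solidSimplex d →
        ∫⁻ t in Icc 0 (1 - ∑ i, y i), ENNReal.ofReal (simplexMonomial α (Fin.cons t y)) =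
          ENNReal.ofReal (simplexMonomial (mergeExponents α) y) *
            ENNReal.ofReal (beta (α 1 + 1) (α 0 + 1)) := by
      filter_upwards [measure_eq_zero_iff_ae_notMem.1 volume_setOf_sum_eq_one] with y hy hyS
      exact lintegral_simplexMonomial_cons (hα 0) (hα 1) (hyS.2.lt_of_ne hy)
    rw [lintegral_solidSimplex_succ (by fun_prop),
      setLIntegral_congr_fun_ae (measurableSet_solidSimplex d) hslice,
      lintegral_mul_const _ (by fun_prop), ih hmerge,
      ← ENNReal.ofReal_mul (multiBeta_add_one_pos hmerge).le,
      multiBeta_mergeExponents_add_one_mul_beta (hα 0) (hα 1)]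

theorem simplex_moment_formula_general (d : ℕ) (α : Fin (d + 1) → ℝ)
    (hα : ∀ i, -1 < α i) :
    (∫ x in {x : Fin d → ℝ | (∀ i, 0 ≤ x i) ∧ ∑ i, x i ≤ 1},
        (∏ i : Fin d, x i ^ α i.succ) * (1 - ∑ i, x i) ^ α 0) =
      (∏ i : Fin (d + 1), Real.Gamma (α i + 1)) /
        Real.Gamma ((d : ℝ) + 1 + ∑ i, α i) := by
  have hnonneg : 0 ≤ᵐ[volume.restrict (solidSimplex d)] simplexMonomial α :=
    ae_restrict_of_forall_mem (measurableSet_solidSimplex d) fun x => simplexMonomial_nonneg α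
  calc ∫ x in solidSimplex d, simplexMonomial α x
      = (∫⁻ x in solidSimplex d, ENNReal.ofReal (simplexMonomial α x)).toReal :=
        integral_eq_lintegral_of_nonneg_ae hnonneg (by fun_prop)
    _ = multiBeta (α + 1) := by
        rw [lintegral_simplexMonomial d hα,
          ENNReal.toReal_ofReal (multiBeta_add_one_pos hα).le]
    _ = _ := by
        simp only [multiBeta, Pi.add_apply, Pi.one_apply, Finset.sum_add_distrib,
          Finset.sum_const, Finset.card_univ, Fintype.card_fin, nsmul_one, Nat.cast_add,
          Nat.cast_one]
        ring_nf

/-- Moment formula on the standard `d`-simplex (Lemma 1). -/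
theorem simplex_moment_formula (d : ℕ) (hd : 1 ≤ d) (α : Fin (d + 1) → ℝ)
    (hα : ∀ i, -1 < α i) :
    (∫ x in {x : Fin d → ℝ | (∀ i, 0 ≤ x i) ∧ ∑ i, x i ≤ 1},
        (∏ i : Fin d, x i ^ α i.succ) * (1 - ∑ i, x i) ^ α 0) =
      (∏ i : Fin (d + 1), Real.Gamma (α i + 1)) /
        Real.Gamma ((d : ℝ) + 1 + ∑ i, α i) :=
  simplex_moment_formula_general d α hα
end

section
/- Let Δ₃ = {(x,y,z) ∈ ℝ³ : x ≥ 0, y ≥ 0, z ≥ 0, x + y + z ≤ 1} be the standard 3-simplex with barycentric coordinates λ₁ = x, λ₂ = y, λ₃ = z, λ₄ = 1 − x − y − z, let β > 0, and let Ω^{(β)} = (Γ(4β)/Γ(β)⁴)(λ₁λ₂λ₃λ₄)^{β−1} be the symmetric Dirichlet density on Δ₃. With h_β = β²/(2(2β+1)(4β+1)) and k_β = β/(2(2β+1)), and ρ = λ₁λ₂ + h_β − k_β(λ₁ + λ₂), the polynomial ρ is orthogonal to all affine functions with respect to Ω^{(β)}: ∫_{Δ₃} ρ Ω^{(β)} dx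 = 0 and ∫_{Δ₃} ρ λ_r Ω^{(β)} dx = 0 for r = 1, 2, 3, 4. -/
open MeasureTheory

noncomputable section

/-- The standard 3-simplex in `ℝ³`. -/
def simplex3 : Set (Fin 3 → ℝ) :=
  {x | 0 ≤ x 0 ∧ 0 ≤ x 1 ∧ 0 ≤ x 2 ∧ x 0 + x 1 + x 2 ≤ 1}

/-- Barycentric coordinates on the standard 3-simplex. -/
def lam : Fin 4 → (Fin 3 → ℝ) → ℝ :=
  ![fun x => x 0, fun x => x 1, fun x => x 2, fun x => 1 - x 0 - x 1 - x 2]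

/-- The symmetric Dirichlet density of parameter `β` on the standard 3-simplex. -/
def dirichlet3 (β : ℝ) : (Fin 3 → ℝ) → ℝ := fun x =>
  Real.Gamma (4 * β) / (Real.Gamma β) ^ 4 * (lam 0 x * lam 1 x * lam 2 x * lam 3 x) ^ (β - 1)

/-- The volumetric quadratic polynomial `ρ = λ₁λ₂ + h_β − k_β(λ₁+λ₂)`. -/
def rhoBeta (β : ℝ) : (Fin 3 → ℝ) → ℝ := fun x =>
  lam 0 x * lam 1 x + β ^ 2 / (2 * (2 * β + 1) * (4 * β + 1)) -
    β / (2 * (2 * β + 1)) * (lam 0 x + lam 1 x)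

/-!
The Dirichlet integral
`∫_{x ≥ 0, ∑ xᵢ ≤ T} ∏ xᵢ ^ (aᵢ - 1) * (T - ∑ xᵢ) ^ (b - 1) = T ^ (∑ aᵢ + b - 1) ∏ Γ(aᵢ) Γ(b) / Γ(∑ aᵢ + b)`
follows by induction on the dimension: slicing along the first coordinate `t`, the inner
integral is the same integral over a simplex of size `T - t`, and what remains is a scaled Beta
integral in `t`. Consequently the moments of `Ω^{(β)}` are `E[∏ λᵢ ^ kᵢ] = ∏ (β)_{kᵢ} / (4β)_{∑ kᵢ}`
with rising factorials `(·)_k`. Multiplying `ρ` by `1` or by `λ_r` gives a combination of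
monomials in the `λᵢ`, so each orthogonality relation becomes a rational identity in `β`.
-/

open Set
open scoped ENNReal

def cornerSimplex (n : ℕ) (T : ℝ) : Set (Fin n → ℝ) := {x | (∀ i, 0 ≤ x i) ∧ ∑ i, x i ≤ T}

lemma measurableSet_cornerSimplex (n : ℕ) (T : ℝ) : MeasurableSet (cornerSimplex n T) := by
  unfold cornerSimplex
  measurability

lemma cons_mem_cornerSimplex {n : ℕ} {T t : ℝ} {y : Fin n → ℝ} :
    (Fin.cons t y : Fin (n + 1) → ℝ) ∈ cornerSimplex (n + 1) T ↔
      t ∈ Icc 0 T ∧ y ∈ cornerSimplex n (T - t) := by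
  simp only [cornerSimplex, mem_ofPred_eq, Fin.forall_fin_succ, Fin.sum_univ_succ, Fin.cons_zero,
    Fin.cons_succ, mem_Icc]
  constructor
  · rintro ⟨⟨ht, hy⟩, hsum⟩
    exact ⟨⟨ht, by linarith [Finset.sum_nonneg fun i (_ : i ∈ Finset.univ) => hy i]⟩, hy,
      by linarith⟩
  · rintro ⟨⟨ht, -⟩, hy, hsum⟩
    exact ⟨⟨ht, hy⟩, by linarith⟩

lemma lintegral_cornerSimplex_succ {n : ℕ} {T : ℝ} {f : (Fin (n + 1) → ℝ) → ℝ≥0∞}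
    (hf : Measurable f) :
    ∫⁻ x in cornerSimplex (n + 1) T, f x =
      ∫⁻ t in Icc 0 T, ∫⁻ y in cornerSimplex n (T - t), f (Fin.cons t y) := by
  set e := MeasurableEquiv.piFinSuccAbove (fun _ : Fin (n + 1) => ℝ) 0
  have he : ∀ p, e.symm p = Fin.cons p.1 p.2 := fun p => by
    simp only [e, MeasurableEquiv.piFinSuccAbove_symm_apply, Fin.insertNthEquiv_zero]
    rfl
  rw [← lintegral_indicator (measurableSet_cornerSimplex _ _),
    ← (volume_preserving_piFinSuccAbove (fun _ => ℝ) 0).symm.lintegral_comp_emb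
      e.symm.measurableEmbedding, Measure.volume_eq_prod,
    lintegral_prod (fun p => (cornerSimplex (n + 1) T).indicator f (e.symm p))
      ((hf.indicator (measurableSet_cornerSimplex _ _)).comp e.symm.measurable).aemeasurable,
    ← lintegral_indicator measurableSet_Icc]
  refine lintegral_congr fun t => ?_
  by_cases ht : t ∈ Icc 0 T
  · rw [indicator_of_mem ht, ← lintegral_indicator (measurableSet_cornerSimplex _ _)]
    refine lintegral_congr fun y => ?_
    classical
    simp only [he, indicator_apply, cons_mem_cornerSimplex, ht, true_and]
  · simp [he, cons_mem_cornerSimplex, ht]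

theorem integral_rpow_mul_sub_rpow {p q T : ℝ} (hp : 0 < p) (hq : 0 < q) (hT : 0 < T) :
    ∫ t in 0..T, t ^ (p - 1) * (T - t) ^ (q - 1) =
      T ^ (p + q - 1) * (Real.Gamma p * Real.Gamma q / Real.Gamma (p + q)) := by
  apply Complex.ofReal_injective
  have hC := Complex.betaIntegral_scaled p q hT
  rw [Complex.betaIntegral_eq_Gamma_mul_div _ _ (by simpa) (by simpa)] at hC
  rw [← intervalIntegral.integral_ofReal]
  convert hC using 1
  · refine intervalIntegral.integral_congr fun t ht => ?_
    rw [uIcc_of_le hT.le] at ht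
    push_cast [Complex.ofReal_cpow ht.1, Complex.ofReal_cpow (sub_nonneg.2 ht.2)]
    rfl
  · rw [← Complex.ofReal_add, Complex.ofReal_mul, Complex.ofReal_cpow hT.le]
    push_cast [← Complex.ofReal_add, Complex.Gamma_ofReal]
    rfl

theorem lintegral_Ioo_rpow_mul_sub_rpow {p q T : ℝ} (hp : 0 < p) (hq : 0 < q) (hT : 0 < T) :
    ∫⁻ t in Ioo 0 T, ENNReal.ofReal (t ^ (p - 1) * (T - t) ^ (q - 1)) =
      ENNReal.ofReal (T ^ (p + q - 1) * (Real.Gamma p * Real.Gamma q / Real.Gamma (p + q))) := by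
  have hval := integral_rpow_mul_sub_rpow hp hq hT
  rw [intervalIntegral.integral_of_le hT.le, integral_Ioc_eq_integral_Ioo] at hval
  -- a non-integrable function would have Bochner integral `0`
  have hint : IntegrableOn (fun t : ℝ => t ^ (p - 1) * (T - t) ^ (q - 1)) (Ioo 0 T) := by
    refine .of_integral_ne_zero ?_
    rw [hval]
    positivity
  rw [← ofReal_integral_eq_lintegral_ofReal hint, hval]
  filter_upwards [ae_restrict_mem measurableSet_Ioo] with t ht
  exact mul_nonneg (Real.rpow_nonneg ht.1.le _) (Real.rpow_nonneg (by linarith [ht.2]) _)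

def dirichletIntegrand {n : ℕ} (a : Fin n → ℝ) (b T : ℝ) (x : Fin n → ℝ) : ℝ :=
  (∏ i, x i ^ (a i - 1)) * (T - ∑ i, x i) ^ (b - 1)

lemma measurable_dirichletIntegrand {n : ℕ} (a : Fin n → ℝ) (b T : ℝ) :
    Measurable (dirichletIntegrand a b T) := by
  unfold dirichletIntegrand
  fun_prop

lemma dirichletIntegrand_nonneg_ae {n : ℕ} (a : Fin n → ℝ) (b T : ℝ) :
    0 ≤ᵐ[volume.restrict (cornerSimplex n T)] dirichletIntegrand a b T :=
  (ae_restrict_iff' (measurableSet_cornerSimplex n T)).2 <| ae_of_all _ fun _ hx =>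
    mul_nonneg (Finset.prod_nonneg fun i _ => Real.rpow_nonneg (hx.1 i) _)
      (Real.rpow_nonneg (sub_nonneg.2 hx.2) _)

lemma dirichletIntegrand_cons {n : ℕ} (a : Fin (n + 1) → ℝ) (b T t : ℝ) (y : Fin n → ℝ) :
    dirichletIntegrand a b T (Fin.cons t y) =
      t ^ (a 0 - 1) * dirichletIntegrand (Fin.tail a) b (T - t) y := by
  simp only [dirichletIntegrand, Fin.prod_univ_succ, Fin.sum_univ_succ, Fin.cons_zero,
    Fin.cons_succ, Fin.tail, sub_sub, mul_assoc]

theorem lintegral_cornerSimplex_dirichletIntegrand {n : ℕ} {a : Fin n → ℝ} {b T : ℝ}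
    (ha : ∀ i, 0 < a i) (hb : 0 < b) (hT : 0 < T) :
    ∫⁻ x in cornerSimplex n T, ENNReal.ofReal (dirichletIntegrand a b T x) =
      ENNReal.ofReal (T ^ (∑ i, a i + b - 1) *
        ((∏ i, Real.Gamma (a i)) * Real.Gamma b / Real.Gamma (∑ i, a i + b))) := by
  induction n generalizing T with
  | zero =>
    have : cornerSimplex 0 T = univ := by ext; simp [cornerSimplex, hT.le]
    simp [this, dirichletIntegrand, volume_pi, (Real.Gamma_pos_of_pos hb).ne']
  | succ n ih =>
    set σ := ∑ i, Fin.tail a i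
    set K := (∏ i, Real.Gamma (Fin.tail a i)) * Real.Gamma b / Real.Gamma (σ + b)
    have hσb : 0 < σ + b := add_pos_of_nonneg_of_pos (Finset.sum_nonneg fun i _ => (ha _).le) hb
    have hK : 0 ≤ K := div_nonneg (mul_nonneg (Finset.prod_nonneg fun i _ =>
      (Real.Gamma_pos_of_pos (ha i.succ)).le) (Real.Gamma_pos_of_pos hb).le)
        (Real.Gamma_pos_of_pos hσb).le
    calc ∫⁻ x in cornerSimplex (n + 1) T, ENNReal.ofReal (dirichletIntegrand a b T x)
        = ∫⁻ t in Ioo 0 T, ∫⁻ y in cornerSimplex n (T - t),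
            ENNReal.ofReal (dirichletIntegrand a b T (Fin.cons t y)) := by
          rw [lintegral_cornerSimplex_succ (measurable_dirichletIntegrand a b T).ennreal_ofReal,
            setLIntegral_congr Ioo_ae_eq_Icc.symm]
      _ = ∫⁻ t in Ioo 0 T,
            ENNReal.ofReal K * ENNReal.ofReal (t ^ (a 0 - 1) * (T - t) ^ (σ + b - 1)) := by
          refine setLIntegral_congr_fun measurableSet_Ioo fun t ht => ?_
          rw [← ENNReal.ofReal_mul hK]
          simp only [dirichletIntegrand_cons, ENNReal.ofReal_mul (Real.rpow_nonneg ht.1.le _)]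
          rw [lintegral_const_mul' _ _ ENNReal.ofReal_ne_top,
            ih (a := Fin.tail a) (fun i => ha _) (sub_pos.2 ht.2),
            ← ENNReal.ofReal_mul (Real.rpow_nonneg ht.1.le _)]
          congr 1
          simp only [K, σ]
          ring
      _ = _ := by
          rw [lintegral_const_mul' _ _ ENNReal.ofReal_ne_top,
            lintegral_Ioo_rpow_mul_sub_rpow (ha 0) hσb hT, ← ENNReal.ofReal_mul hK]
          congr 1
          have h₁ := (Real.Gamma_pos_of_pos hσb).ne'
          have h₂ := (Real.Gamma_pos_of_pos (add_pos (ha 0) hσb)).ne'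
          simp only [K, σ, Fin.sum_univ_succ, Fin.prod_univ_succ, Fin.tail, ← add_assoc]
            at h₁ h₂ ⊢
          field_simp

theorem integrableOn_cornerSimplex_dirichletIntegrand {n : ℕ} {a : Fin n → ℝ} {b T : ℝ}
    (ha : ∀ i, 0 < a i) (hb : 0 < b) (hT : 0 < T) :
    IntegrableOn (dirichletIntegrand a b T) (cornerSimplex n T) := by
  refine ⟨(measurable_dirichletIntegrand a b T).aestronglyMeasurable, ?_⟩
  rw [hasFiniteIntegral_iff_ofReal (dirichletIntegrand_nonneg_ae a b T),
    lintegral_cornerSimplex_dirichletIntegrand ha hb hT]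
  exact ENNReal.ofReal_lt_top

theorem integral_cornerSimplex_dirichletIntegrand {n : ℕ} {a : Fin n → ℝ} {b T : ℝ}
    (ha : ∀ i, 0 < a i) (hb : 0 < b) (hT : 0 < T) :
    ∫ x in cornerSimplex n T, dirichletIntegrand a b T x =
      T ^ (∑ i, a i + b - 1) *
        ((∏ i, Real.Gamma (a i)) * Real.Gamma b / Real.Gamma (∑ i, a i + b)) := by
  rw [integral_eq_lintegral_of_nonneg_ae (dirichletIntegrand_nonneg_ae a b T)
      (measurable_dirichletIntegrand a b T).aestronglyMeasurable,
    lintegral_cornerSimplex_dirichletIntegrand ha hb hT, ENNReal.toReal_ofReal]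
  have hσb : 0 < ∑ i, a i + b :=
    add_pos_of_nonneg_of_pos (Finset.sum_nonneg fun i _ => (ha i).le) hb
  have := Finset.prod_pos fun i (_ : i ∈ Finset.univ) => Real.Gamma_pos_of_pos (ha i)
  positivity

theorem Real.Gamma_add_natCast {x : ℝ} (hx : 0 < x) (n : ℕ) :
    Real.Gamma (x + n) = (ascPochhammer ℝ n).eval x * Real.Gamma x := by
  induction n with
  | zero => simp
  | succ n ih =>
    rw [Nat.cast_succ, ← add_assoc, Real.Gamma_add_one (by positivity), ih,
      ascPochhammer_succ_eval]
    ring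

lemma pow_mul_rpow_sub_one {x β : ℝ} (hx : 0 ≤ x) (hβ : 0 < β) (k : ℕ) :
    x ^ k * x ^ (β - 1) = x ^ (β + k - 1) := by
  rcases k.eq_zero_or_pos with rfl | hk
  · simp
  · rw [show β + k - 1 = β - 1 + k by ring,
      Real.rpow_add_natCast' hx (by have : (1 : ℝ) ≤ k := mod_cast hk; linarith)]
    ring

lemma simplex3_eq_cornerSimplex : simplex3 = cornerSimplex 3 1 := by
  ext x
  simp [simplex3, cornerSimplex, Fin.forall_fin_succ, Fin.sum_univ_three, and_assoc]

lemma measurableSet_simplex3 : MeasurableSet simplex3 :=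
  simplex3_eq_cornerSimplex ▸ measurableSet_cornerSimplex 3 1

lemma lam_nonneg {x : Fin 3 → ℝ} (hx : x ∈ simplex3) (i : Fin 4) : 0 ≤ lam i x := by
  obtain ⟨h0, h1, h2, h3⟩ := hx
  fin_cases i
  exacts [h0, h1, h2, show 0 ≤ 1 - x 0 - x 1 - x 2 by linarith]

lemma lam_castSucc (i : Fin 3) (x : Fin 3 → ℝ) : lam i.castSucc x = x i := by
  fin_cases i <;> rfl

lemma lam_last (x : Fin 3 → ℝ) : lam (Fin.last 3) x = 1 - ∑ i, x i := by
  rw [Fin.sum_univ_three, ← sub_sub, ← sub_sub]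
  rfl

def lamMonomial (k : Fin 4 → ℕ) (x : Fin 3 → ℝ) : ℝ := ∏ i, lam i x ^ k i

lemma lamMonomial_zero (x : Fin 3 → ℝ) : lamMonomial 0 x = 1 := by
  simp [lamMonomial]

lemma lamMonomial_add (k l : Fin 4 → ℕ) (x : Fin 3 → ℝ) :
    lamMonomial (k + l) x = lamMonomial k x * lamMonomial l x := by
  simp only [lamMonomial, Pi.add_apply, pow_add, Finset.prod_mul_distrib]

lemma lamMonomial_single (i : Fin 4) (x : Fin 3 → ℝ) :
    lamMonomial (Pi.single i 1) x = lam i x := by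
  simp [lamMonomial, Pi.single_apply]

lemma lamMonomial_mul_dirichlet3 {β : ℝ} (hβ : 0 < β) (k : Fin 4 → ℕ) {x : Fin 3 → ℝ}
    (hx : x ∈ simplex3) :
    lamMonomial k x * dirichlet3 β x = Real.Gamma (4 * β) / Real.Gamma β ^ 4 *
      dirichletIntegrand (fun i => β + k i.castSucc) (β + k (Fin.last 3)) 1 x := by
  have hprod : (lam 0 x * lam 1 x * lam 2 x * lam 3 x) ^ (β - 1) = ∏ i, lam i x ^ (β - 1) := by
    rw [Real.finsetProd_rpow _ _ fun i _ => lam_nonneg hx i, Fin.prod_univ_four]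
  rw [dirichlet3, hprod, mul_left_comm, lamMonomial, ← Finset.prod_mul_distrib]
  simp only [pow_mul_rpow_sub_one (lam_nonneg hx _) hβ, Fin.prod_univ_castSucc, lam_castSucc,
    lam_last, dirichletIntegrand]

lemma integrableOn_lamMonomial_mul_dirichlet3 {β : ℝ} (hβ : 0 < β) (k : Fin 4 → ℕ) :
    IntegrableOn (fun x => lamMonomial k x * dirichlet3 β x) simplex3 := by
  have h := (integrableOn_cornerSimplex_dirichletIntegrand
    (a := fun i : Fin 3 => β + k i.castSucc) (b := β + k (Fin.last 3))
    (fun i => by positivity) (by positivity) one_pos).const_mul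
      (Real.Gamma (4 * β) / Real.Gamma β ^ 4)
  rw [← simplex3_eq_cornerSimplex] at h
  exact IntegrableOn.congr_fun h (fun x hx => (lamMonomial_mul_dirichlet3 hβ k hx).symm)
    measurableSet_simplex3

def dirichletMoment (β : ℝ) (k : Fin 4 → ℕ) : ℝ :=
  (∏ i, (ascPochhammer ℝ (k i)).eval β) / (ascPochhammer ℝ (∑ i, k i)).eval (4 * β)

theorem integral_lamMonomial_mul_dirichlet3 {β : ℝ} (hβ : 0 < β) (k : Fin 4 → ℕ) :
    ∫ x in simplex3, lamMonomial k x * dirichlet3 β x = dirichletMoment β k := by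
  rw [setIntegral_congr_fun measurableSet_simplex3 fun x hx => lamMonomial_mul_dirichlet3 hβ k hx,
    integral_const_mul, simplex3_eq_cornerSimplex,
    integral_cornerSimplex_dirichletIntegrand (fun i => by positivity) (by positivity) one_pos]
  have hsum : ∑ i : Fin 3, (β + k i.castSucc) + (β + k (Fin.last 3)) = 4 * β + ↑(∑ i, k i) := by
    simp only [Fin.sum_univ_four, Fin.sum_univ_three, Nat.cast_add, Fin.reduceCastSucc,
      Fin.reduceLast, Fin.isValue]
    ring
  have hprod : (∏ i : Fin 3, Real.Gamma (β + k i.castSucc)) * Real.Gamma (β + k (Fin.last 3)) =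
      (∏ i, (ascPochhammer ℝ (k i)).eval β) * Real.Gamma β ^ 4 := by
    rw [← Fin.prod_univ_castSucc (fun i => Real.Gamma (β + k i))]
    simp [Real.Gamma_add_natCast hβ, Finset.prod_mul_distrib]
  rw [hsum, hprod, Real.one_rpow, one_mul, Real.Gamma_add_natCast (by positivity),
    dirichletMoment]
  field_simp

lemma rhoBeta_mul_lamMonomial (β : ℝ) (k : Fin 4 → ℕ) (x : Fin 3 → ℝ) :
    rhoBeta β x * lamMonomial k x =
      lamMonomial (Pi.single 0 1 + Pi.single 1 1 + k) x
        + β ^ 2 / (2 * (2 * β + 1) * (4 * β + 1)) * lamMonomial k x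
        - β / (2 * (2 * β + 1)) *
          (lamMonomial (Pi.single 0 1 + k) x + lamMonomial (Pi.single 1 1 + k) x) := by
  simp only [lamMonomial_add, lamMonomial_single, rhoBeta]
  ring

theorem integral_rhoBeta_mul_lamMonomial_mul_dirichlet3 {β : ℝ} (hβ : 0 < β) (k : Fin 4 → ℕ) :
    ∫ x in simplex3, rhoBeta β x * lamMonomial k x * dirichlet3 β x =
      dirichletMoment β (Pi.single 0 1 + Pi.single 1 1 + k)
        + β ^ 2 / (2 * (2 * β + 1) * (4 * β + 1)) * dirichletMoment β k
        - β / (2 * (2 * β + 1)) *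
          (dirichletMoment β (Pi.single 0 1 + k) + dirichletMoment β (Pi.single 1 1 + k)) := by
  have I := integrableOn_lamMonomial_mul_dirichlet3 hβ
  simp_rw [rhoBeta_mul_lamMonomial]
  set h := β ^ 2 / (2 * (2 * β + 1) * (4 * β + 1))
  set c := β / (2 * (2 * β + 1))
  simp only [sub_mul, add_mul, mul_assoc]
  rw [integral_sub, integral_add, integral_const_mul, integral_const_mul, integral_add]
  · simp only [integral_lamMonomial_mul_dirichlet3 hβ]
  all_goals first
    | exact I _
    | exact (I _).const_mul _
    | exact (I _).add ((I _).const_mul _)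
    | exact ((I _).add (I _)).const_mul _

/-- `ρ = λ₁λ₂ + h_β − k_β(λ₁+λ₂)` is orthogonal to all affine functions on the standard
3-simplex with respect to the symmetric Dirichlet density `Ω^{(β)}`. -/
theorem rhoBeta_orthogonal_to_affine (β : ℝ) (hβ : 0 < β) :
    (∫ x in simplex3, rhoBeta β x * dirichlet3 β x = 0) ∧
      (∀ r : Fin 4, ∫ x in simplex3, rhoBeta β x * lam r x * dirichlet3 β x = 0) := by
  have h₁ : 4 * β + 1 ≠ 0 := by positivity
  have h₂ : 2 * β + 1 ≠ 0 := by positivity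
  have h₃ : 4 * β + 2 ≠ 0 := by positivity
  constructor
  · have h := integral_rhoBeta_mul_lamMonomial_mul_dirichlet3 hβ 0
    simp only [lamMonomial_zero, mul_one] at h
    rw [h]
    simp only [dirichletMoment, Fin.prod_univ_four, Fin.sum_univ_four, Pi.add_apply, Pi.zero_apply,
      Pi.single_apply, Fin.reduceEq, ↓reduceIte, Nat.reduceAdd, ascPochhammer_succ_eval,
      ascPochhammer_zero, Polynomial.eval_one, Nat.cast_one, Nat.cast_zero, Fin.isValue]
    field_simp
    ring
  · intro r
    simp_rw [← lamMonomial_single r, integral_rhoBeta_mul_lamMonomial_mul_dirichlet3 hβ]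
    fin_cases r <;>
      simp only [dirichletMoment, Fin.prod_univ_four, Fin.sum_univ_four, Pi.add_apply,
      Pi.single_apply, Fin.reduceEq, ↓reduceIte, Nat.reduceAdd, ascPochhammer_succ_eval,
      ascPochhammer_zero, Polynomial.eval_one, Nat.cast_ofNat, Nat.cast_one, Nat.cast_zero,
      Fin.isValue, Fin.zero_eta, Fin.mk_one, Fin.reduceFinMk] <;>
      field_simp <;> ring

end
end
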